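/- Let N ≥ 2 and let ℒ : ℝ^{N×D} → ℝ be differentiable. Define the batch-normalization standardization map X ↦ Z(X) by R = X − (1_N·1_Nᵀ/N)·X, Σ_j = (1/N)·Σ_{i=1}^{N} R_{ij}² for 1 ≤ j ≤ D, and Z(X)_{ij} = Σ_j^{−1/2}·R_{ij}. Then at every X ∈ ℝ^{N×D} for which Σ_j > 0 for all j, the gradient of ℒ∘Z at X, written DX, satisfies DX = ((1/N)·1_N·Σ^{−1/2}) ⊙ ((N·I_N − 1_N·1_Nᵀ)·DZ − Z ⊙ (1_N·diag(Zᵀ·DZ)ᵀ)), where Z = Z(X) and DZ = ∇ℒ(Z(X)); equivalently, entrywise, DX_{ij} = (Σ_j^{−1/2}/N)·(N·DZ_{ij} − Σ_{n=1}^{N} DZ_{nj} − Z_{ij}·Σ_{n=1}^{N} Z_{nj}·DZ_{nj}). -/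

import Mathlib

/-!
`bnStandardize` acts column by column, and on a column `x ∈ ℝᴺ` it is the standardization
`z = σ^{-1/2} (x - x̄)` with `σ = ‖x - x̄‖² / N`. Since the centered vector sums to zero,
`dσ = (2/N) ⟨x - x̄, dx⟩`, so the Jacobian of standardization is `σ^{-1/2} (I - 𝟙𝟙ᵀ/N - z zᵀ/N)`.
By the chain rule a perturbation of the entry `(i, j)` of `X` propagates only through column `j`,
and contracting column `i` of that Jacobian with `DZ_{·j}` gives the formula.
-/

/-- The batch-normalization standardization map: `R = X − (1_N·1_Nᵀ/N)·X`,
`Σ_j = (1/N)·∑_i R_{ij}²`, `Z(X)_{ij} = Σ_j^{−1/2}·R_{ij}`. -/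
noncomputable def bnStandardize {N D : ℕ} (X : Fin N → Fin D → ℝ) :
    Fin N → Fin D → ℝ :=
  fun i j =>
    (((∑ n, (X n j - (∑ m, X m j) / N) ^ 2) / N) ^ (-(1 : ℝ) / 2)) *
      (X i j - (∑ m, X m j) / N)

open Finset

section Columnwise

variable {ι ι' κ : Type*} {F : (ι → ℝ) → ι' → ℝ} {X : ι → κ → ℝ}

def columnCLM (k : κ) : (ι → κ → ℝ) →L[ℝ] ι → ℝ :=
  ContinuousLinearMap.pi fun m =>
    (ContinuousLinearMap.proj (R := ℝ) (φ := fun _ : κ => ℝ) k).comp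
      (ContinuousLinearMap.proj (R := ℝ) (φ := fun _ : ι => κ → ℝ) m)

@[simp]
theorem columnCLM_apply (k : κ) (X : ι → κ → ℝ) : columnCLM k X = fun m => X m k := rfl

theorem column_single_single [DecidableEq ι] [DecidableEq κ] (i : ι) (j k : κ) :
    (fun m => (Pi.single i (Pi.single j 1) : ι → κ → ℝ) m k) =
      if k = j then Pi.single i 1 else 0 := by
  ext m
  by_cases hk : k = j <;> by_cases hm : m = i <;> simp [hk, hm]

variable [Fintype ι] [Fintype ι'] [Fintype κ]

theorem hasFDerivAt_columnwise (hF : ∀ k, DifferentiableAt ℝ F fun m => X m k) :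
    HasFDerivAt (fun (X : ι → κ → ℝ) n k => F (fun m => X m k) n)
      (ContinuousLinearMap.pi fun n => ContinuousLinearMap.pi fun k =>
        (ContinuousLinearMap.proj n).comp ((fderiv ℝ F fun m => X m k).comp (columnCLM k))) X :=
  hasFDerivAt_pi.2 fun n => hasFDerivAt_pi.2 fun k =>
    hasFDerivAt_pi'.1 (by exact (hF k).hasFDerivAt.comp X (columnCLM k).hasFDerivAt) n

theorem fderiv_columnwise_single [DecidableEq ι] [DecidableEq ι'] [DecidableEq κ]
    (hF : ∀ k, DifferentiableAt ℝ F fun m => X m k) (i : ι) (j : κ) :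
    fderiv ℝ (fun (X : ι → κ → ℝ) n k => F (fun m => X m k) n) X (Pi.single i (Pi.single j 1)) =
      ∑ n, fderiv ℝ F (fun m => X m j) (Pi.single i 1) n • Pi.single n (Pi.single j 1) := by
  ext n k
  rw [(hasFDerivAt_columnwise hF).fderiv]
  simp only [ContinuousLinearMap.pi_apply, ContinuousLinearMap.comp_apply,
    ContinuousLinearMap.proj_apply, columnCLM_apply, column_single_single, Finset.sum_apply,
    Pi.smul_apply, smul_eq_mul]
  rcases eq_or_ne k j with rfl | hk <;> simp [Pi.single_apply, ite_apply, *]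

end Columnwise

namespace BatchNorm

variable {N : ℕ}

noncomputable def center (x : Fin N → ℝ) : Fin N → ℝ := fun n => x n - (∑ m, x m) / N

noncomputable def variance (x : Fin N → ℝ) : ℝ := (∑ n, center x n ^ 2) / N

noncomputable def standardize (x : Fin N → ℝ) : Fin N → ℝ :=
  variance x ^ (-(1 : ℝ) / 2) • center x

theorem sum_center (x : Fin N → ℝ) : ∑ n, center x n = 0 := by
  rcases eq_or_ne N 0 with rfl | hN
  · simp
  · have : (N : ℝ) ≠ 0 := Nat.cast_ne_zero.2 hN
    simp only [center, sum_sub_distrib, sum_const, card_univ, Fintype.card_fin, nsmul_eq_mul]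
    field_simp
    ring

theorem sum_center_mul_center (x y : Fin N → ℝ) :
    ∑ n, center x n * center y n = ∑ n, center x n * y n := by
  have h n : center x n * center y n = center x n * y n - center x n * ((∑ m, y m) / N) :=
    mul_sub _ _ _
  simp only [h, sum_sub_distrib, ← sum_mul, sum_center, zero_mul, sub_zero]

noncomputable def centerCLM : (Fin N → ℝ) →L[ℝ] Fin N → ℝ :=
  LinearMap.toContinuousLinearMap
    { toFun := center
      map_add' x y := by ext n; simp only [center, Pi.add_apply, sum_add_distrib]; ring
      map_smul' c x := by
        ext n; simp only [center, Pi.smul_apply, smul_eq_mul, ← mul_sum, RingHom.id_apply]; ring }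

@[simp]
theorem centerCLM_apply (x : Fin N → ℝ) : centerCLM x = center x := rfl

theorem hasFDerivAt_center (x : Fin N → ℝ) : HasFDerivAt center centerCLM x :=
  centerCLM.hasFDerivAt

theorem hasFDerivAt_variance (x : Fin N → ℝ) :
    HasFDerivAt variance
      ((2 / N : ℝ) • ∑ n, center x n • (ContinuousLinearMap.proj n : (Fin N → ℝ) →L[ℝ] ℝ))
      x := by
  have h : HasFDerivAt variance _ x := (HasFDerivAt.fun_sum fun n _ =>
    ((hasFDerivAt_apply n (center x)).comp x (hasFDerivAt_center x)).pow 2).mul_const (N : ℝ)⁻¹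
  refine h.congr_fderiv (ContinuousLinearMap.ext fun y => ?_)
  simp only [Function.comp_apply, Nat.add_one_sub_one, pow_one, nsmul_eq_mul, Nat.cast_ofNat,
    smul_apply, FunLike.coe_sum, Finset.sum_apply,
    ContinuousLinearMap.comp_apply, centerCLM_apply, ContinuousLinearMap.proj_apply, smul_eq_mul,
    mul_sum, ← sum_center_mul_center x y]
  exact sum_congr rfl fun n _ => by ring

theorem differentiableAt_standardize {x : Fin N → ℝ} (hx : variance x ≠ 0) :
    DifferentiableAt ℝ standardize x :=
  ((hasFDerivAt_variance x).differentiableAt.rpow_const (Or.inl hx)).smul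
    (hasFDerivAt_center x).differentiableAt

theorem fderiv_standardize_apply {x : Fin N → ℝ} (hx : 0 < variance x) (y : Fin N → ℝ) :
    fderiv ℝ standardize x y = variance x ^ (-(1 : ℝ) / 2) •
      (center y - ((∑ n, standardize x n * y n) / N) • standardize x) := by
  have h : HasFDerivAt standardize _ x :=
    ((hasFDerivAt_variance x).rpow_const (p := -(1 : ℝ) / 2) (Or.inl hx.ne')).smul
      (hasFDerivAt_center x)
  have hs : variance x ^ (-(1 : ℝ) / 2 - 1) = variance x ^ (-(1 : ℝ) / 2) / variance x :=
    Real.rpow_sub_one hx.ne' _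
  have hss : variance x ^ (-(1 : ℝ) / 2) * variance x ^ (-(1 : ℝ) / 2) = (variance x)⁻¹ := by
    rw [← Real.rpow_add hx]; norm_num [Real.rpow_neg_one]
  rw [h.fderiv]
  ext n
  simp only [add_apply, smul_apply, centerCLM_apply,
    ContinuousLinearMap.smulRight_apply, FunLike.coe_sum, Finset.sum_apply,
    ContinuousLinearMap.proj_apply, smul_eq_mul, Pi.add_apply, Pi.smul_apply, Pi.sub_apply,
    standardize, hs, mul_assoc, ← mul_sum]
  linear_combination
    (variance x ^ (-(1 : ℝ) / 2) * (∑ i, center x i * y i) * center x n / N) * hss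

theorem sum_fderiv_standardize_single_mul {x : Fin N → ℝ} (hx : 0 < variance x) (i : Fin N)
    (g : Fin N → ℝ) :
    ∑ n, fderiv ℝ standardize x (Pi.single i 1) n * g n =
      variance x ^ (-(1 : ℝ) / 2) / N *
        (N * g i - ∑ n, g n - standardize x i * ∑ n, standardize x n * g n) := by
  have hN : (N : ℝ) ≠ 0 := Nat.cast_ne_zero.2 i.pos.ne'
  have hsum : ∑ n, fderiv ℝ standardize x (Pi.single i 1) n * g n =
      variance x ^ (-(1 : ℝ) / 2) * (g i - (∑ n, g n) / N -
        standardize x i / N * ∑ n, standardize x n * g n) := by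
    simp only [fderiv_standardize_apply hx, center, Pi.single_apply, sum_ite_eq', mem_univ,
      if_true, Pi.smul_apply, Pi.sub_apply, smul_eq_mul, mul_sub, sub_mul, ite_mul, one_mul,
      zero_mul, mul_ite, mul_zero, sum_sub_distrib, mul_assoc, ← mul_sum]
    ring
  rw [hsum]
  field_simp

-- `bnStandardize X` is definitionally `fun n k => standardize (fun m => X m k) n`.
variable {D : ℕ} {X : Fin N → Fin D → ℝ}

theorem differentiableAt_bnStandardize (hX : ∀ k, 0 < variance fun m => X m k) :
    DifferentiableAt ℝ bnStandardize X :=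
  (hasFDerivAt_columnwise fun k => differentiableAt_standardize (hX k).ne').differentiableAt

theorem fderiv_bnStandardize_single (hX : ∀ k, 0 < variance fun m => X m k) (i : Fin N)
    (j : Fin D) :
    fderiv ℝ bnStandardize X (Pi.single i (Pi.single j 1)) =
      ∑ n, fderiv ℝ standardize (fun m => X m j) (Pi.single i 1) n •
        Pi.single n (Pi.single j 1) :=
  fderiv_columnwise_single (fun k => differentiableAt_standardize (hX k).ne') i j

end BatchNorm

theorem batchnorm_input_gradient_general {N D : ℕ}
    (L : (Fin N → Fin D → ℝ) → ℝ) (hL : Differentiable ℝ L)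
    (X : Fin N → Fin D → ℝ)
    (hSigma : ∀ j, 0 < (∑ n, (X n j - (∑ m, X m j) / N) ^ 2) / N)
    (i : Fin N) (j : Fin D) :
    fderiv ℝ (fun X' => L (bnStandardize X')) X (Pi.single i (Pi.single j 1)) =
      ((((∑ n, (X n j - (∑ m, X m j) / N) ^ 2) / N) ^ (-(1 : ℝ) / 2)) / N) *
        ((N : ℝ) * fderiv ℝ L (bnStandardize X) (Pi.single i (Pi.single j 1)) -
          (∑ n, fderiv ℝ L (bnStandardize X) (Pi.single n (Pi.single j 1))) -
          bnStandardize X i j *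
            ∑ n, bnStandardize X n j *
              fderiv ℝ L (bnStandardize X) (Pi.single n (Pi.single j 1))) := by
  rw [fderiv_fun_comp X (hL _) (BatchNorm.differentiableAt_bnStandardize hSigma),
    ContinuousLinearMap.comp_apply, BatchNorm.fderiv_bnStandardize_single hSigma, map_sum]
  simp only [map_smul, smul_eq_mul]
  exact BatchNorm.sum_fderiv_standardize_single_mul (hSigma j) i _

/-- Backpropagation through batch-normalization standardization: writing
`Z = Z(X)` and `DZ = ∇ℒ(Z(X))`, the gradient `DX` of `ℒ∘Z` at `X` satisfies,
entrywise, `DX_{ij} = (Σ_j^{−1/2}/N)·(N·DZ_{ij} − ∑_n DZ_{nj} − Z_{ij}·∑_n Z_{nj}·DZ_{nj})`. -/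
theorem batchnorm_input_gradient {N D : ℕ} (hN : 2 ≤ N)
    (L : (Fin N → Fin D → ℝ) → ℝ) (hL : Differentiable ℝ L)
    (X : Fin N → Fin D → ℝ)
    (hSigma : ∀ j, 0 < (∑ n, (X n j - (∑ m, X m j) / N) ^ 2) / N)
    (i : Fin N) (j : Fin D) :
    fderiv ℝ (fun X' => L (bnStandardize X')) X (Pi.single i (Pi.single j 1)) =
      ((((∑ n, (X n j - (∑ m, X m j) / N) ^ 2) / N) ^ (-(1 : ℝ) / 2)) / N) *
        ((N : ℝ) * fderiv ℝ L (bnStandardize X) (Pi.single i (Pi.single j 1)) -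
          (∑ n, fderiv ℝ L (bnStandardize X) (Pi.single n (Pi.single j 1))) -
          bnStandardize X i j *
            ∑ n, bnStandardize X n j *
              fderiv ℝ L (bnStandardize X) (Pi.single n (Pi.single j 1))) :=
  batchnorm_input_gradient_general L hL X hSigma i j
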